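/- arXiv:2311.07454 — 6 statements merged into one kernel-verified Lean document; each statement's English description precedes it below -/
import Mathlib

section
/- Let X, Y, U be finite nonempty types with |U| = k, and let p : X × Y × U → ℝ be a nonnegative function satisfying conditional independence of the first two coordinates given the third: for every u ∈ U and all x ∈ X, y ∈ Y, p(x,y,u) · (Σ_{x',y'} p(x',y',u)) = (Σ_{y'} p(x,y',u)) · (Σ_{x'} p(x',y,u)). Define M : X × Y → ℝ by M(x,y) = Σ_{u ∈ U} p(x,y,u). Then there exist matrices B : X × Fin k → ℝ and C : Fin k × Y → ℝ with all entries nonnegative such that M = B ⬝ C; that is, the nonnegative rank of the probability matrix M is at most k. -/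
/-!
Conditional independence says that, for each latent class `u`, the slice `p(·, ·, u)` is the
outer product of its row sums with its column sums divided by its total mass (a slice of total
mass zero vanishes). Summing the `k` slices writes `M` as a sum of `k` nonnegative rank-one
matrices, i.e. as a nonnegative product with inner dimension `k`.
-/

open Matrix

def HasNonnegFactorization {X Y R : Type*} [Semiring R] [PartialOrder R]
    (ι : Type*) [Fintype ι] (M : Matrix X Y R) : Prop :=
  ∃ (B : Matrix X ι R) (C : Matrix ι Y R), (∀ x i, 0 ≤ B x i) ∧ (∀ i y, 0 ≤ C i y) ∧ M = B * C

namespace HasNonnegFactorization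

variable {X Y ι κ R : Type*} [Semiring R] [PartialOrder R] [Fintype ι] [Fintype κ]
  {M : Matrix X Y R}

theorem of_eq_sum_mul {a : ι → X → R} {b : ι → Y → R} (ha : ∀ i x, 0 ≤ a i x)
    (hb : ∀ i y, 0 ≤ b i y) (hM : ∀ x y, M x y = ∑ i, a i x * b i y) :
    HasNonnegFactorization ι M :=
  ⟨of fun x i => a i x, of b, fun x i => ha i x, hb, by ext x y; simp [mul_apply, hM]⟩

theorem of_equiv (e : ι ≃ κ) (h : HasNonnegFactorization ι M) : HasNonnegFactorization κ M := by
  obtain ⟨B, C, hB, hC, rfl⟩ := h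
  exact ⟨B.submatrix id e.symm, C.submatrix e.symm id, fun x i => hB x _, fun i y => hC _ y,
    by rw [submatrix_mul_equiv, submatrix_id_id]⟩

end HasNonnegFactorization

section RankOne

variable {X Y 𝕜 : Type*} [Fintype X] [Fintype Y] [Field 𝕜] [LinearOrder 𝕜]
  [IsStrictOrderedRing 𝕜]

theorem le_sum_sum_of_nonneg {P : X → Y → 𝕜} (hP : ∀ x y, 0 ≤ P x y) (x : X) (y : Y) :
    P x y ≤ ∑ x', ∑ y', P x' y' :=
  calc P x y ≤ ∑ y', P x y' := Finset.single_le_sum (fun y' _ => hP x y') (Finset.mem_univ y)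
    _ ≤ ∑ x', ∑ y', P x' y' :=
      Finset.single_le_sum (fun x' _ => Finset.sum_nonneg fun y' _ => hP x' y')
        (Finset.mem_univ x)

theorem eq_rowSum_mul_colSum_div_of_indep {P : X → Y → 𝕜} (hP : ∀ x y, 0 ≤ P x y)
    (hind : ∀ x y, P x y * ∑ x', ∑ y', P x' y' = (∑ y', P x y') * ∑ x', P x' y) (x : X) (y : Y) :
    P x y = (∑ y', P x y') * ((∑ x', P x' y) / ∑ x', ∑ y', P x' y') := by
  rcases eq_or_ne (∑ x', ∑ y', P x' y') 0 with htot | htot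
  · rw [htot, div_zero, mul_zero]
    exact le_antisymm (htot ▸ le_sum_sum_of_nonneg hP x y) (hP x y)
  · rw [mul_div_assoc', eq_div_iff htot, hind]

end RankOne

theorem stmt_0_general {X Y U : Type*} [Fintype X] [Fintype Y] [Fintype U]
    (k : ℕ) (hk : Fintype.card U = k)
    (p : X × Y × U → ℝ) (hp : ∀ x y u, 0 ≤ p (x, y, u))
    (hCI : ∀ u x y,
      p (x, y, u) * (∑ x', ∑ y', p (x', y', u)) =
        (∑ y', p (x, y', u)) * (∑ x', p (x', y, u)))
    (M : Matrix X Y ℝ) (hM : ∀ x y, M x y = ∑ u, p (x, y, u)) :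
    ∃ (B : Matrix X (Fin k) ℝ) (C : Matrix (Fin k) Y ℝ),
      (∀ x i, 0 ≤ B x i) ∧ (∀ i y, 0 ≤ C i y) ∧ M = B * C := by
  have hU : HasNonnegFactorization U M :=
    .of_eq_sum_mul (a := fun u x => ∑ y', p (x, y', u))
      (b := fun u y => (∑ x', p (x', y, u)) / ∑ x', ∑ y', p (x', y', u))
      (fun u x => Finset.sum_nonneg fun y' _ => hp x y' u)
      (fun u y => div_nonneg (Finset.sum_nonneg fun x' _ => hp x' y u)
        (Finset.sum_nonneg fun x' _ => Finset.sum_nonneg fun y' _ => hp x' y' u))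
      (fun x y => by
        rw [hM]
        exact Finset.sum_congr rfl fun u _ =>
          eq_rowSum_mul_colSum_div_of_indep (P := fun x y => p (x, y, u))
            (fun x y => hp x y u) (hCI u) x y)
  exact hU.of_equiv (Fintype.equivFinOfCardEq hk)

/-- Lemma `nnrank_independence`, nonnegative-rank form.
A `k`-mixture (over a latent class `U` with `|U| = k`) of joint distributions in each of
which the first coordinate is independent of the second has a joint probability matrix
admitting a nonnegative factorization with inner dimension `k`; i.e. its nonnegative
rank is at most `k`. -/
theorem stmt_0 {X Y U : Type*} [Fintype X] [Fintype Y] [Fintype U]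
    [Nonempty X] [Nonempty Y] [Nonempty U] (k : ℕ) (hk : Fintype.card U = k)
    (p : X × Y × U → ℝ) (hp : ∀ x y u, 0 ≤ p (x, y, u))
    (hCI : ∀ u x y,
      p (x, y, u) * (∑ x', ∑ y', p (x', y', u)) =
        (∑ y', p (x, y', u)) * (∑ x', p (x', y, u)))
    (M : Matrix X Y ℝ) (hM : ∀ x y, M x y = ∑ u, p (x, y, u)) :
    ∃ (B : Matrix X (Fin k) ℝ) (C : Matrix (Fin k) Y ℝ),
      (∀ x i, 0 ≤ B x i) ∧ (∀ i y, 0 ≤ C i y) ∧ M = B * C :=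
  stmt_0_general k hk p hp hCI M hM
end

section
/- Let X, Y, U be finite nonempty types with |U| = k, and let p : X × Y × U → ℝ be a nonnegative function satisfying conditional independence of the first two coordinates given the third: for every u ∈ U and all x ∈ X, y ∈ Y, p(x,y,u) · (Σ_{x',y'} p(x',y',u)) = (Σ_{y'} p(x,y',u)) · (Σ_{x'} p(x',y,u)). Define M : X × Y → ℝ by M(x,y) = Σ_{u ∈ U} p(x,y,u). Then the rank of M as a real matrix is at most k. -/
/-! Each slice `p (·, ·, u)` is the outer product of its row sums with its column sums divided
by its total, so `M` factors through `ℝ^U`. -/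

open Finset

/-- The total `∑ x, ∑ y, q x y` vanishes only when `q` does, and then `t / 0 = 0` makes the
right-hand side vanish too. -/
theorem eq_rowSum_mul_colSum_div_total {K X Y : Type*} [Field K] [LinearOrder K]
    [IsStrictOrderedRing K] [Fintype X] [Fintype Y] (q : X → Y → K) (hq : ∀ x y, 0 ≤ q x y)
    (hCI : ∀ x y, q x y * (∑ x', ∑ y', q x' y') = (∑ y', q x y') * (∑ x', q x' y)) (x : X)
    (y : Y) : q x y = (∑ y', q x y') * ((∑ x', q x' y) / ∑ x', ∑ y', q x' y') := by
  by_cases htotal : ∑ x', ∑ y', q x' y' = 0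
  · have hle : q x y ≤ ∑ x', ∑ y', q x' y' :=
      calc q x y ≤ ∑ y', q x y' := single_le_sum (fun y' _ => hq x y') (mem_univ y)
        _ ≤ ∑ x', ∑ y', q x' y' :=
          single_le_sum (fun x' _ => sum_nonneg fun y' _ => hq x' y') (mem_univ x)
    rw [htotal, div_zero, mul_zero]
    exact le_antisymm (htotal ▸ hle) (hq x y)
  · rw [mul_div_assoc', eq_div_iff htotal, hCI]

theorem stmt_1_general {X Y U : Type*} [Fintype X] [Fintype Y] [Fintype U]
    (k : ℕ) (hk : Fintype.card U = k)
    (p : X × Y × U → ℝ) (hp : ∀ x y u, 0 ≤ p (x, y, u))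
    (hCI : ∀ u x y,
      p (x, y, u) * (∑ x', ∑ y', p (x', y', u)) =
        (∑ y', p (x, y', u)) * (∑ x', p (x', y, u)))
    (M : Matrix X Y ℝ) (hM : ∀ x y, M x y = ∑ u, p (x, y, u)) :
    M.rank ≤ k := by
  let A : Matrix X U ℝ := .of fun x u => ∑ y', p (x, y', u)
  let B : Matrix U Y ℝ := .of fun u y => (∑ x', p (x', y, u)) / ∑ x', ∑ y', p (x', y', u)
  have hMAB : M = A * B := by
    ext x y
    rw [hM, Matrix.mul_apply]
    exact sum_congr rfl fun u _ =>
      eq_rowSum_mul_colSum_div_total (fun x y => p (x, y, u)) (hp · · u) (hCI u) x y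
  calc M.rank = (A * B).rank := by rw [hMAB]
    _ ≤ A.rank := Matrix.rank_mul_le_left A B
    _ ≤ Fintype.card U := Matrix.rank_le_card_width A
    _ = k := hk

/-- Lemma `nnrank_independence`, ordinary-rank consequence.
A `k`-mixture (over a latent class `U` with `|U| = k`) of joint distributions in each of
which the first coordinate is independent of the second has a joint probability matrix
of real rank at most `k`. -/
theorem stmt_1 {X Y U : Type*} [Fintype X] [Fintype Y] [Fintype U]
    [Nonempty X] [Nonempty Y] [Nonempty U] (k : ℕ) (hk : Fintype.card U = k)
    (p : X × Y × U → ℝ) (hp : ∀ x y u, 0 ≤ p (x, y, u))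
    (hCI : ∀ u x y,
      p (x, y, u) * (∑ x', ∑ y', p (x', y', u)) =
        (∑ y', p (x, y', u)) * (∑ x', p (x', y, u)))
    (M : Matrix X Y ℝ) (hM : ∀ x y, M x y = ∑ u, p (x, y, u)) :
    M.rank ≤ k :=
  stmt_1_general k hk p hp hCI M hM
end

section
/- Let G = (V, E) be a finite DAG and let V_i, V_j ∈ V be nonadjacent. Then every independence preserving augmentation (S_i⁺, S_j⁺) of (V_i, V_j) satisfies S_i⁺ ∩ IMD(V_i, V_j) = ∅ and S_j⁺ ∩ IMD(V_i, V_j) = ∅. -/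
/-! Basic notions for directed graphs given by an edge relation `E` on a vertex type `V`. -/

/-- Two vertices are adjacent if there is an edge between them in either direction. -/
def UndirAdj {V : Type*} (E : V → V → Prop) (a b : V) : Prop := E a b ∨ E b a

/-- `Descend E v w` means `w` is a descendant of `v`: it is reachable from `v`
by a directed path of length at least 1. -/
def Descend {V : Type*} (E : V → V → Prop) (v w : V) : Prop := Relation.TransGen E v w

/-- A directed graph is a DAG iff its transitive closure is irreflexive. -/
def IsDAG {V : Type*} (E : V → V → Prop) : Prop := Irreflexive (Relation.TransGen E)

/-- `f 0, f 1, …, f m` is a path: the vertices are distinct and each consecutive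
pair is adjacent (in either direction). -/
def IsPathOn {V : Type*} (E : V → V → Prop) (m : ℕ) (f : ℕ → V) : Prop :=
  (∀ i ≤ m, ∀ j ≤ m, f i = f j → i = j) ∧ ∀ i < m, UndirAdj E (f i) (f (i + 1))

/-- The interior vertex `f i` is a collider on the path `f` if both of its
neighboring path edges point into it. -/
def IsCollider {V : Type*} (E : V → V → Prop) (f : ℕ → V) (i : ℕ) : Prop :=
  E (f (i - 1)) (f i) ∧ E (f (i + 1)) (f i)

/-- The path `f 0, …, f m` is active given the conditioning set `C`: every interior
non-collider is outside `C`, and every interior collider is in `C` or has a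
descendant in `C`. -/
def ActivePath {V : Type*} (E : V → V → Prop) (C : Set V) (m : ℕ) (f : ℕ → V) : Prop :=
  IsPathOn E m f ∧ ∀ i, 0 < i → i < m →
    (¬ IsCollider E f i → f i ∉ C) ∧
    (IsCollider E f i → f i ∈ C ∨ ∃ w ∈ C, Descend E (f i) w)

/-- `C` d-separates `X` and `Y`: no path from a vertex of `X` to a vertex of `Y`
is active given `C`. -/
def DSep {V : Type*} (E : V → V → Prop) (X Y C : Set V) : Prop :=
  ∀ (m : ℕ) (f : ℕ → V), f 0 ∈ X → f m ∈ Y → ¬ ActivePath E C m f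

/-- The immoral descendants of `vi, vj`: their common children together with all
descendants of those common children. -/
def IMD {V : Type*} (E : V → V → Prop) (vi vj : V) : Set V :=
  {c | E vi c ∧ E vj c} ∪ {w | ∃ c, E vi c ∧ E vj c ∧ Descend E c w}

/-- An independence preserving augmentation (IPA) of a nonadjacent pair `(vi, vj)`:
disjoint sets `Si, Sj ⊆ V \ {vi, vj}` such that for some conditioning set `C`
disjoint from `Si ∪ {vi} ∪ Sj ∪ {vj}`, the sets `Si ∪ {vi}` and `Sj ∪ {vj}`
are d-separated given `C`. -/
def IsIPA {V : Type*} (E : V → V → Prop) (vi vj : V) (Si Sj : Set V) : Prop :=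
  Disjoint Si Sj ∧ vi ∉ Si ∧ vj ∉ Si ∧ vi ∉ Sj ∧ vj ∉ Sj ∧
  ∃ C : Set V, Disjoint C ((Si ∪ {vi}) ∪ (Sj ∪ {vj})) ∧
    DSep E (Si ∪ {vi}) (Sj ∪ {vj}) C

/-!
A vertex `x` of `Si ∪ {vi}` that is a common child `c` of `vi, vj`, or a descendant of one,
breaks the d-separation. If `c` has a descendant (or is itself) in `C`, the collider path
`vi → c ← vj` is active. Otherwise the directed path `vj → c → ⋯ → x`, read backwards from
`x`, is active: acyclicity makes it a path without colliders, and its interior vertices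
descend from `c`, hence avoid `C`. The other side follows by symmetry of d-separation.
-/

open Relation

section

variable {V : Type*} {E : V → V → Prop}

namespace IsDAG

lemma irrefl_edge (hdag : IsDAG E) {a : V} (h : E a a) : False :=
  hdag a (.single h)

lemma asymm_edge (hdag : IsDAG E) {a b : V} (hab : E a b) (hba : E b a) : False :=
  hdag a ((TransGen.single hab).tail hba)

end IsDAG

lemma mem_IMD_iff {vi vj x : V} :
    x ∈ IMD E vi vj ↔ ∃ c, E vi c ∧ E vj c ∧ ReflTransGen E c x := by
  simp only [IMD, Descend, Set.mem_union, Set.mem_ofPred_eq, reflTransGen_iff_eq_or_transGen]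
  constructor
  · rintro (⟨hi, hj⟩ | ⟨c, hi, hj, hcx⟩)
    exacts [⟨x, hi, hj, .inl rfl⟩, ⟨c, hi, hj, .inr hcx⟩]
  · rintro ⟨c, hi, hj, rfl | hcx⟩
    exacts [.inl ⟨hi, hj⟩, .inr ⟨c, hi, hj, hcx⟩]

lemma reflTransGen_edge_avoiding {C : Set V} {c x : V} (h : ReflTransGen E c x)
    (hC : ∀ w, ReflTransGen E c w → w ∉ C) :
    ReflTransGen (fun u w => E u w ∧ w ∉ C) c x := by
  induction h with
  | refl => exact .refl
  | tail hcu huw ih => exact ih.tail ⟨huw, hC _ (hcu.tail huw)⟩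

lemma exists_chain_of_reflTransGen {r : V → V → Prop} {a b : V} (h : ReflTransGen r a b) :
    ∃ (m : ℕ) (g : ℕ → V), g 0 = b ∧ g m = a ∧ ∀ i < m, r (g (i + 1)) (g i) := by
  induction h with
  | refl => exact ⟨0, fun _ => a, rfl, rfl, fun i hi => absurd hi (Nat.not_lt_zero i)⟩
  | @tail u b _ hub ih =>
    obtain ⟨m, g, hg0, hgm, hg⟩ := ih
    refine ⟨m + 1, fun i => if i = 0 then b else g (i - 1), rfl, by simpa using hgm,
      fun i hi => ?_⟩
    rcases i with _ | i
    · simpa [hg0] using hub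
    · simpa using hg i (by omega)

section Chain

variable {m : ℕ} {g : ℕ → V}

lemma transGen_of_chain (hg : ∀ i < m, E (g (i + 1)) (g i)) {i j : ℕ} (hij : i < j)
    (hjm : j ≤ m) : TransGen E (g j) (g i) := by
  induction j with
  | zero => omega
  | succ k ih =>
    rcases Nat.lt_or_ge i k with hik | hik
    · exact (TransGen.single (hg k (by omega))).trans (ih hik (by omega))
    · obtain rfl : i = k := by omega
      exact .single (hg i (by omega))

lemma isPathOn_of_chain (hdag : IsDAG E) (hg : ∀ i < m, E (g (i + 1)) (g i)) :
    IsPathOn E m g := by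
  refine ⟨fun i hi j hj hgij => ?_, fun i hi => .inr (hg i hi)⟩
  by_contra hne
  rcases Nat.lt_or_gt_of_ne hne with hij | hji
  · exact hdag _ (hgij ▸ transGen_of_chain hg hij hj)
  · exact hdag _ (hgij ▸ transGen_of_chain hg hji hi)

lemma activePath_of_chain (hdag : IsDAG E) {C : Set V} (hg : ∀ i < m, E (g (i + 1)) (g i))
    (hC : ∀ i, 0 < i → i < m → g i ∉ C) : ActivePath E C m g := by
  refine ⟨isPathOn_of_chain hdag hg, fun i hi0 him => ⟨fun _ => hC i hi0 him, fun hcol => ?_⟩⟩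
  have hdown : E (g i) (g (i - 1)) := by
    simpa [Nat.sub_add_cancel hi0] using hg (i - 1) (by omega)
  exact (hdag.asymm_edge hdown hcol.1).elim

end Chain

namespace DSep

variable {X Y C : Set V}

lemma symm (h : DSep E X Y C) : DSep E Y X C := by
  rintro m f hf0 hfm ⟨⟨hinj, hadj⟩, hint⟩
  refine h m (fun i => f (m - i)) (by simpa) (by simpa using hf0)
    ⟨⟨fun i hi j hj hij => ?_, fun i hi => ?_⟩, fun i hi0 him => ?_⟩
  · have := hinj (m - i) (by omega) (m - j) (by omega) hij
    omega
  · have hsucc : m - (i + 1) + 1 = m - i := by omega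
    simpa [UndirAdj, hsucc, or_comm] using hadj (m - (i + 1)) (by omega)
  · have hcol : IsCollider E (fun i => f (m - i)) i ↔ IsCollider E f (m - i) := by
      have h1 : m - (i - 1) = m - i + 1 := by omega
      have h2 : m - (i + 1) = m - i - 1 := by omega
      simp only [IsCollider, h1, h2, and_comm]
    simpa only [hcol] using hint (m - i) (by omega) (by omega)

/-- The one-vertex path joins any common point of `X` and `Y`. -/
lemma disjoint (h : DSep E X Y C) : Disjoint X Y :=
  Set.disjoint_left.mpr fun x hX hY =>
    h 0 (fun _ => x) hX hY ⟨⟨fun _ hi _ hj _ => by omega, fun _ hi => absurd hi (by omega)⟩,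
      fun _ hi0 him => absurd him (by omega)⟩

lemma not_reflTransGen_of_avoiding (hdag : IsDAG E) (h : DSep E X Y C) {x y : V}
    (hx : x ∈ X) (hy : y ∈ Y) : ¬ ReflTransGen (fun u w => E u w ∧ w ∉ C) y x := by
  intro hyx
  obtain ⟨m, g, hg0, hgm, hg⟩ := exists_chain_of_reflTransGen hyx
  exact h m g (hg0 ▸ hx) (hgm ▸ hy)
    (activePath_of_chain hdag (fun i hi => (hg i hi).1) fun i _ him => (hg i him).2)

lemma notMem_of_reflTransGen_commonChild (hdag : IsDAG E) (h : DSep E X Y C) {a b c w : V}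
    (ha : a ∈ X) (hb : b ∈ Y) (hac : E a c) (hbc : E b c) (hcw : ReflTransGen E c w) :
    w ∉ C := by
  intro hwC
  have hab : a ≠ b := h.disjoint.ne_of_mem ha hb
  have hca : c ≠ a := by rintro rfl; exact hdag.irrefl_edge hac
  have hcb : c ≠ b := by rintro rfl; exact hdag.irrefl_edge hbc
  set f : ℕ → V := fun i => if i = 0 then a else if i = 1 then c else b
  refine h 2 f (by simpa [f]) (by simpa [f])
    ⟨⟨fun i hi j hj hij => ?_, fun i hi => ?_⟩, fun i hi0 hi2 => ?_⟩
  · interval_cases i <;> interval_cases j <;> simp_all [f]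
  · interval_cases i
    exacts [.inl (by simpa [f]), .inr (by simpa [f])]
  · obtain rfl : i = 1 := by omega
    have hcol : IsCollider E f 1 := ⟨by simpa [f], by simpa [f]⟩
    refine ⟨fun hn => absurd hcol hn, fun _ => ?_⟩
    rcases reflTransGen_iff_eq_or_transGen.mp hcw with rfl | hcw
    exacts [.inl (by simpa [f]), .inr ⟨w, hwC, by simpa [f]⟩]

lemma not_reflTransGen_of_commonChild (hdag : IsDAG E) (h : DSep E X Y C) {a b c x : V}
    (ha : a ∈ X) (hb : b ∈ Y) (hac : E a c) (hbc : E b c) (hx : x ∈ X) :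
    ¬ ReflTransGen E c x := by
  intro hcx
  have hcC : ∀ w, ReflTransGen E c w → w ∉ C := fun _ =>
    h.notMem_of_reflTransGen_commonChild hdag ha hb hac hbc
  exact h.not_reflTransGen_of_avoiding hdag hx hb
    (.head ⟨hbc, hcC c .refl⟩ (reflTransGen_edge_avoiding hcx hcC))

end DSep

end

theorem stmt_5_general {V : Type*} (E : V → V → Prop)
    (hdag : IsDAG E) (vi vj : V) (Si Sj : Set V)
    (hipa : IsIPA E vi vj Si Sj) :
    (Si ∪ {vi}) ∩ IMD E vi vj = ∅ ∧ (Sj ∪ {vj}) ∩ IMD E vi vj = ∅ := by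
  obtain ⟨-, -, -, -, -, C, -, hsep⟩ := hipa
  have hvi : vi ∈ Si ∪ {vi} := Set.mem_union_right _ rfl
  have hvj : vj ∈ Sj ∪ {vj} := Set.mem_union_right _ rfl
  constructor <;> refine Set.eq_empty_iff_forall_notMem.mpr fun x ⟨hx, hxI⟩ => ?_ <;>
    obtain ⟨c, hic, hjc, hcx⟩ := mem_IMD_iff.mp hxI
  · exact hsep.not_reflTransGen_of_commonChild hdag hvi hvj hic hjc hx hcx
  · exact hsep.symm.not_reflTransGen_of_commonChild hdag hvj hvi hjc hic hx hcx

/-- Lemma: IPAs avoid the immoral descendants.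
In a finite DAG, every independence preserving augmentation
`(Si ∪ {vi}, Sj ∪ {vj})` of a nonadjacent pair `(vi, vj)` is disjoint from
`IMD(vi, vj)`. -/
theorem stmt_5 {V : Type*} [Fintype V] (E : V → V → Prop)
    (hdag : IsDAG E) (vi vj : V) (hne : vi ≠ vj)
    (hnadj : ¬ UndirAdj E vi vj) (Si Sj : Set V)
    (hipa : IsIPA E vi vj Si Sj) :
    (Si ∪ {vi}) ∩ IMD E vi vj = ∅ ∧ (Sj ∪ {vj}) ∩ IMD E vi vj = ∅ :=
  stmt_5_general E hdag vi vj Si Sj hipa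
end

section
/- Let G = (V, E) be a finite DAG in which every vertex has degree at most Δ, and let V_i, V_j ∈ V be nonadjacent. Let A_ij = V \ (DE(V_i) ∩ DE(V_j)). For every integer s ≥ 1, if |A_ij| ≥ (2 + Δ²)(s + 1), then there exists an independence preserving augmentation (S_i ∪ {V_i}, S_j ∪ {V_j}) of (V_i, V_j) with |S_i| = |S_j| = s and with S_i ∪ {V_i} and S_j ∪ {V_j} both contained in A_ij. -/
/-! An active path from `Si ∪ {vi}` to `Sj ∪ {vj}` has a segment whose interior avoids both sides.
Conditioning on every vertex outside the two sides and outside `M = IMD E vi vj` forces the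
interior non-colliders of that segment into `M` and its colliders out of `M`, because `M` is closed
under descendants. If the two sides are nonadjacent and share no common child outside `M`, a
collider cannot occur at all, so the segment runs forward into `M` and stays there, which is
impossible since it ends outside `M`. Sides of size `s` with that property are picked greedily:
each vertex is in conflict (adjacent, or sharing a child) with at most `Δ²` others, and
`(2 + Δ²)(s + 1)` vertices leave room for both choices inside `A_ij`, which contains `vi`, `vj`
and avoids `M`. -/

lemma Set.Finite.ncard_biUnion_le_ncard_mul {ι α : Type*} {t : Set ι} (ht : t.Finite)
    {s : ι → Set α} {n : ℕ} (h : ∀ i ∈ t, (s i).ncard ≤ n) :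
    (⋃ i ∈ t, s i).ncard ≤ t.ncard * n := by
  have hsum := ht.toFinset.set_ncard_biUnion_le s
  simp only [Set.Finite.mem_toFinset] at hsum
  calc _ ≤ ∑ i ∈ ht.toFinset, (s i).ncard := hsum
    _ ≤ ht.toFinset.card • n := Finset.sum_le_card_nsmul _ _ _ (by simpa using h)
    _ = t.ncard * n := by rw [smul_eq_mul, Set.ncard_eq_toFinset_card t ht]

lemma Set.exists_subset_disjoint_ncard_eq {α : Type*} [Finite α] {A B : Set α} {n : ℕ}
    (h : n + B.ncard ≤ A.ncard) : ∃ S ⊆ A, Disjoint S B ∧ S.ncard = n := by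
  have hdiff : n ≤ (A \ B).ncard := by
    have := Set.le_ncard_sdiff B A
    omega
  obtain ⟨S, hS, rfl⟩ := Set.exists_subset_card_eq hdiff
  exact ⟨S, hS.trans Set.sdiff_subset, Set.disjoint_of_subset_left hS disjoint_sdiff_left, rfl⟩

section Conflict

variable {V : Type*} {E : V → V → Prop}

def Conflict (E : V → V → Prop) (a b : V) : Prop := UndirAdj E a b ∨ ∃ c, E a c ∧ E b c

lemma Conflict.symm {a b : V} : Conflict E a b → Conflict E b a := by
  rintro ((h | h) | ⟨c, hac, hbc⟩)
  exacts [.inl (.inr h), .inl (.inl h), .inr ⟨c, hbc, hac⟩]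

lemma ncard_conflict_le [Finite V] {Δ : ℕ}
    (hdeg : ∀ v : V, ({w | E w v}.ncard + {w | E v w}.ncard) ≤ Δ) (b : V) :
    {a | a ≠ b ∧ Conflict E a b}.ncard ≤ Δ ^ 2 := by
  have hsub : {a | a ≠ b ∧ Conflict E a b} ⊆
      {w | E w b} ∪ ⋃ c ∈ {c | E b c}, insert c ({w | E w c} \ {b}) := by
    rintro a ⟨hab, (h | h) | ⟨c, hac, hbc⟩⟩
    · exact .inl h
    · exact .inr (Set.mem_biUnion h (.inl rfl))
    · exact .inr (Set.mem_biUnion hbc (.inr ⟨hac, hab⟩))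
  have hchild : ∀ c ∈ {c | E b c}, (insert c ({w | E w c} \ {b})).ncard ≤ Δ := by
    intro c hbc
    have hc := hdeg c
    have hpa := Set.ncard_sdiff_singleton_of_mem (s := {w | E w c}) hbc
    have hpos : 0 < {w | E w c}.ncard := (Set.ncard_pos (Set.toFinite _)).2 ⟨b, hbc⟩
    have := Set.ncard_insert_le c ({w | E w c} \ {b})
    omega
  have hb := hdeg b
  calc _ ≤ _ := Set.ncard_le_ncard hsub
    _ ≤ {w | E w b}.ncard + {c | E b c}.ncard * Δ :=
        (Set.ncard_union_le _ _).trans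
          (Nat.add_le_add_left ((Set.toFinite _).ncard_biUnion_le_ncard_mul hchild) _)
    _ ≤ Δ ^ 2 := by nlinarith

lemma exists_conflictFree_sets [Finite V] {Δ : ℕ}
    (hdeg : ∀ v : V, ({w | E w v}.ncard + {w | E v w}.ncard) ≤ Δ) (vi vj : V) (A : Set V)
    {s : ℕ} (hcard : (2 + Δ ^ 2) * (s + 1) ≤ A.ncard) :
    ∃ Si Sj : Set V, Si ⊆ A ∧ Sj ⊆ A ∧ Si.ncard = s ∧ Sj.ncard = s ∧
      Disjoint Si ({vi, vj} ∪ Sj) ∧ Disjoint Sj {vi, vj} ∧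
      ∀ a ∈ Si ∪ {vi}, ∀ b ∈ Sj ∪ {vj}, a = vi ∧ b = vj ∨ ¬ Conflict E a b := by
  set N : V → Set V := fun b => {a | a ≠ b ∧ Conflict E a b}
  have hN : ∀ b, (N b).ncard ≤ Δ ^ 2 := ncard_conflict_le hdeg
  have hpair : ({vi, vj} : Set V).ncard ≤ 2 := by
    have := Set.ncard_insert_le vi {vj}
    rwa [Set.ncard_singleton] at this
  obtain ⟨Sj, hSjA, hSj, hSjcard⟩ :=
    Set.exists_subset_disjoint_ncard_eq (A := A) (B := {vi, vj} ∪ N vi) (n := s) <| by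
      have := Set.ncard_union_le {vi, vj} (N vi)
      nlinarith [hN vi]
  obtain ⟨Si, hSiA, hSi, hSicard⟩ :=
    Set.exists_subset_disjoint_ncard_eq (A := A) (n := s)
      (B := {vi, vj} ∪ Sj ∪ ⋃ b ∈ Sj ∪ {vj}, N b) <| by
      have hU := (Set.toFinite (Sj ∪ {vj})).ncard_biUnion_le_ncard_mul (fun b _ => hN b)
      have := Set.ncard_union_le Sj {vj}
      have := Set.ncard_union_le {vi, vj} Sj
      have := Set.ncard_union_le ({vi, vj} ∪ Sj) (⋃ b ∈ Sj ∪ {vj}, N b)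
      rw [Set.ncard_singleton] at *
      nlinarith
  refine ⟨Si, Sj, hSiA, hSjA, hSicard, hSjcard, hSi.mono_right Set.subset_union_left,
    hSj.mono_right Set.subset_union_left, ?_⟩
  rintro a (ha | rfl) b hb
  · have hbB : b ∈ {vi, vj} ∪ Sj ∪ ⋃ b ∈ Sj ∪ {vj}, N b := by
      rcases hb with hb | rfl
      exacts [.inl (.inr hb), .inl (.inl (.inr rfl))]
    refine .inr fun hab => hSi.notMem_of_mem_left ha (.inr (Set.mem_biUnion hb ⟨?_, hab⟩))
    rintro rfl
    exact hSi.notMem_of_mem_left ha hbB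
  · rcases hb with hb | rfl
    · refine .inr fun hab => hSj.notMem_of_mem_left hb (.inr ⟨?_, hab.symm⟩)
      rintro rfl
      exact hSj.notMem_of_mem_left hb (.inl (.inl rfl))
    · exact .inl ⟨rfl, rfl⟩

end Conflict

lemma exists_consecutive_visits {α : Type*} {P Q : Set α} (hPQ : Disjoint P Q)
    {f : ℕ → α} {m : ℕ} (h0 : f 0 ∈ P) (hm : f m ∈ Q) :
    ∃ k t, k < t ∧ t ≤ m ∧ f k ∈ P ∧ f t ∈ Q ∧ ∀ r, k < r → r < t → f r ∉ P ∧ f r ∉ Q := by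
  classical
  have hex : ∃ t, f t ∈ Q := ⟨m, hm⟩
  have ht0 : Nat.find hex ≠ 0 := fun h =>
    hPQ.notMem_of_mem_left h0 (h ▸ Nat.find_spec hex)
  have hk := Nat.findGreatest_le (P := fun i => f i ∈ P) (Nat.find hex - 1)
  refine ⟨Nat.findGreatest (fun i => f i ∈ P) (Nat.find hex - 1), Nat.find hex, by omega,
    Nat.find_min' hex hm, Nat.findGreatest_spec (P := fun i => f i ∈ P) (Nat.zero_le _) h0,
    Nat.find_spec hex, fun r hkr hrt => ⟨Nat.findGreatest_is_greatest hkr (by omega),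
    Nat.find_min hex hrt⟩⟩

section DSeparation

variable {V : Type*} {E : V → V → Prop} {M : Set V}

def DescClosed (E : V → V → Prop) (M : Set V) : Prop :=
  ∀ ⦃u w : V⦄, u ∈ M → Descend E u w → w ∈ M

lemma DescClosed.mem_of_edge (hM : DescClosed E M) {u w : V} (hu : u ∈ M) (h : E u w) :
    w ∈ M :=
  hM hu (.single h)

lemma descClosed_IMD (vi vj : V) : DescClosed E (IMD E vi vj) := by
  rintro u w (⟨h1, h2⟩ | ⟨c, h1, h2, hcu⟩) huw
  exacts [.inr ⟨u, h1, h2, huw⟩, .inr ⟨c, h1, h2, hcu.trans huw⟩]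

lemma IMD_subset_commonDescendants (vi vj : V) :
    IMD E vi vj ⊆ {v | Descend E vi v ∧ Descend E vj v} := by
  rintro v (⟨h1, h2⟩ | ⟨c, h1, h2, hcv⟩)
  exacts [⟨.single h1, .single h2⟩, ⟨.head h1 hcv, .head h2 hcv⟩]

lemma ActivePath.notMem_of_isCollider {C : Set V} {m : ℕ} {f : ℕ → V}
    (hact : ActivePath E C m f) (hM : DescClosed E M) (hCM : Disjoint C M) {r : ℕ}
    (h0 : 0 < r) (hr : r < m) (hcol : IsCollider E f r) : f r ∉ M := by
  intro hfr
  rcases (hact.2 r h0 hr).2 hcol with hC | ⟨w, hw, hdw⟩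
  exacts [hCM.notMem_of_mem_left hC hfr, hCM.notMem_of_mem_left hw (hM hfr hdw)]

variable {P Q : Set V}

lemma ActivePath.false_of_segment (hdag : IsDAG E) (hM : DescClosed E M)
    (hPM : Disjoint P M) (hQM : Disjoint Q M)
    (hadj : ∀ a ∈ P, ∀ b ∈ Q, ¬ UndirAdj E a b)
    (hcc : ∀ a ∈ P, ∀ b ∈ Q, ∀ c, E a c → E b c → c ∈ M)
    {m : ℕ} {f : ℕ → V} (hact : ActivePath E (P ∪ Q ∪ M)ᶜ m f) {k t : ℕ} (hkt : k < t)
    (htm : t ≤ m) (hk : f k ∈ P) (ht : f t ∈ Q)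
    (hmid : ∀ r, k < r → r < t → f r ∉ P ∧ f r ∉ Q) : False := by
  have hcol : ∀ r, k < r → r < t → IsCollider E f r → f r ∉ M := fun r hkr hrt =>
    hact.notMem_of_isCollider hM (disjoint_compl_left.mono_right Set.subset_union_right)
      (by omega) (by omega)
  have hnoncol : ∀ r, k < r → r < t → ¬ IsCollider E f r → f r ∈ M := by
    intro r hkr hrt hnc
    have hC := (hact.2 r (by omega) (by omega)).1 hnc
    simp only [Set.mem_compl_iff, Set.mem_union, not_not] at hC
    have := hmid r hkr hrt
    tauto
  -- A collider inside the segment is flanked by colliders or by members of `M`; the former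
  -- give a 2-cycle, the latter put it into `M`. So it sits between `f k` and `f t`.
  have hnocol : ∀ r, k < r → r < t → ¬ IsCollider E f r := by
    intro r hkr hrt hc
    have hfr := hcol r hkr hrt hc
    have hleft : r - 1 = k := by
      by_contra hne
      by_cases hc' : IsCollider E f (r - 1)
      · have hback : E (f r) (f (r - 1)) := by simpa [show r - 1 + 1 = r by omega] using hc'.2
        exact hdag _ (.tail (.single hc.1) hback)
      · exact hfr (hM.mem_of_edge (hnoncol (r - 1) (by omega) (by omega) hc') hc.1)
    have hright : r + 1 = t := by
      by_contra hne
      by_cases hc' : IsCollider E f (r + 1)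
      · have hfwd : E (f r) (f (r + 1)) := by simpa using hc'.1
        exact hdag _ (.tail (.single hc.2) hfwd)
      · exact hfr (hM.mem_of_edge (hnoncol (r + 1) (by omega) (by omega) hc') hc.2)
    exact hfr (hcc _ hk _ ht _ (hleft ▸ hc.1) (hright ▸ hc.2))
  have hkt1 : k + 1 < t := by
    by_contra
    have hstep := hact.1.2 k (by omega)
    rw [show k + 1 = t by omega] at hstep
    exact hadj _ hk _ ht hstep
  have hray : ∀ r, k ≤ r → r < t → E (f r) (f (r + 1)) ∧ f (r + 1) ∈ M := by
    intro r hkr hrt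
    induction r, hkr using Nat.le_induction with
    | base =>
      have hM1 := hnoncol (k + 1) (by omega) hkt1 (hnocol _ (by omega) hkt1)
      exact ⟨(hact.1.2 k (by omega)).resolve_right fun h =>
        hPM.notMem_of_mem_left hk (hM.mem_of_edge hM1 h), hM1⟩
    | succ r hkr ih =>
      obtain ⟨hE, hfr⟩ := ih (by omega)
      have hnc := hnocol (r + 1) (by omega) hrt
      have hE' : E (f (r + 1)) (f (r + 1 + 1)) :=
        (hact.1.2 (r + 1) (by omega)).resolve_right fun h => hnc ⟨by simpa using hE, h⟩
      exact ⟨hE', hM.mem_of_edge hfr hE'⟩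
  have hfinal := (hray (t - 1) (by omega) (by omega)).2
  rw [show t - 1 + 1 = t by omega] at hfinal
  exact hQM.notMem_of_mem_left ht hfinal

theorem dSep_compl_union (hdag : IsDAG E) (hM : DescClosed E M) (hPQ : Disjoint P Q)
    (hPM : Disjoint P M) (hQM : Disjoint Q M)
    (hadj : ∀ a ∈ P, ∀ b ∈ Q, ¬ UndirAdj E a b)
    (hcc : ∀ a ∈ P, ∀ b ∈ Q, ∀ c, E a c → E b c → c ∈ M) :
    DSep E P Q (P ∪ Q ∪ M)ᶜ := by
  intro m f h0 hm hact
  obtain ⟨k, t, hkt, htm, hk, ht, hmid⟩ := exists_consecutive_visits hPQ h0 hm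
  exact hact.false_of_segment hdag hM hPM hQM hadj hcc hkt htm hk ht hmid

theorem isIPA_of_conflictFree (hdag : IsDAG E) {vi vj : V} (hne : vi ≠ vj)
    (hnadj : ¬ UndirAdj E vi vj) {Si Sj : Set V} (hM : DescClosed E M)
    (hPM : Disjoint (Si ∪ {vi}) M) (hQM : Disjoint (Sj ∪ {vj}) M)
    (hcc : ∀ c, E vi c → E vj c → c ∈ M)
    (hSi : Disjoint Si ({vi, vj} ∪ Sj)) (hSj : Disjoint Sj {vi, vj})
    (hfree : ∀ a ∈ Si ∪ {vi}, ∀ b ∈ Sj ∪ {vj}, a = vi ∧ b = vj ∨ ¬ Conflict E a b) :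
    IsIPA E vi vj Si Sj := by
  have hvi : vi ∉ Si := fun h => hSi.notMem_of_mem_left h (.inl (.inl rfl))
  have hvj : vj ∉ Si := fun h => hSi.notMem_of_mem_left h (.inl (.inr rfl))
  have hvi' : vi ∉ Sj := fun h => hSj.notMem_of_mem_left h (.inl rfl)
  have hvj' : vj ∉ Sj := fun h => hSj.notMem_of_mem_left h (.inr rfl)
  have hPQ : Disjoint (Si ∪ {vi}) (Sj ∪ {vj}) := by
    simp only [Set.disjoint_union_left, Set.disjoint_union_right, Set.disjoint_singleton_left,
      Set.disjoint_singleton_right]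
    exact ⟨⟨hSi.mono_right Set.subset_union_right, hvi'⟩, fun h => h.elim hvj (hne ∘ Eq.symm)⟩
  refine ⟨hSi.mono_right Set.subset_union_right, hvi, hvj, hvi', hvj', _,
    disjoint_compl_left.mono_right Set.subset_union_left,
    dSep_compl_union hdag hM hPQ hPM hQM ?_ ?_⟩
  · intro a ha b hb hab
    rcases hfree a ha b hb with ⟨rfl, rfl⟩ | h
    exacts [hnadj hab, h (.inl hab)]
  · intro a ha b hb c hac hbc
    rcases hfree a ha b hb with ⟨rfl, rfl⟩ | h
    exacts [hcc c hac hbc, absurd (.inr ⟨c, hac, hbc⟩) h]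

end DSeparation

theorem stmt_6_general {V : Type*} [Fintype V] (E : V → V → Prop) (Δ : ℕ)
    (hdag : IsDAG E)
    (hdeg : ∀ v : V, ({w | E w v}.ncard + {w | E v w}.ncard) ≤ Δ)
    (vi vj : V) (hne : vi ≠ vj) (hnadj : ¬ UndirAdj E vi vj)
    (Aij : Set V) (hAij : Aij = {v : V | ¬ (Descend E vi v ∧ Descend E vj v)})
    (s : ℕ)
    (hcard : (2 + Δ ^ 2) * (s + 1) ≤ Aij.ncard) :
    ∃ Si Sj : Set V, Si.ncard = s ∧ Sj.ncard = s ∧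
      IsIPA E vi vj Si Sj ∧
      Si ∪ {vi} ⊆ Aij ∧ Sj ∪ {vj} ⊆ Aij := by
  have hAM : Disjoint Aij (IMD E vi vj) :=
    hAij ▸ disjoint_compl_left.mono_right (IMD_subset_commonDescendants vi vj)
  have hvi : vi ∈ Aij := hAij ▸ fun h => hdag vi h.1
  have hvj : vj ∈ Aij := hAij ▸ fun h => hdag vj h.2
  obtain ⟨Si, Sj, hSiA, hSjA, hSi, hSj, hSiD, hSjD, hfree⟩ :=
    exists_conflictFree_sets hdeg vi vj Aij hcard
  have hPA : Si ∪ {vi} ⊆ Aij := Set.union_subset hSiA (Set.singleton_subset_iff.2 hvi)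
  have hQA : Sj ∪ {vj} ⊆ Aij := Set.union_subset hSjA (Set.singleton_subset_iff.2 hvj)
  refine ⟨Si, Sj, hSi, hSj, ?_, hPA, hQA⟩
  exact isIPA_of_conflictFree hdag hne hnadj (descClosed_IMD vi vj) (hAM.mono_left hPA)
    (hAM.mono_left hQA) (fun c h1 h2 => .inl ⟨h1, h2⟩) hSiD hSjD hfree

/-- Lemma: enough non-common-descendants guarantee an IPA.
In a finite DAG of maximum degree `Δ`, for nonadjacent `vi, vj`, if the set
`A = V \ (DE(vi) ∩ DE(vj))` has at least `(2 + Δ²)(s + 1)` vertices (`s ≥ 1`),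
then there is an IPA `(Si ∪ {vi}, Sj ∪ {vj})` of `(vi, vj)` with
`|Si| = |Sj| = s` whose two sides are contained in `A`. -/
theorem stmt_6 {V : Type*} [Fintype V] (E : V → V → Prop) (Δ : ℕ)
    (hdag : IsDAG E)
    (hdeg : ∀ v : V, ({w | E w v}.ncard + {w | E v w}.ncard) ≤ Δ)
    (vi vj : V) (hne : vi ≠ vj) (hnadj : ¬ UndirAdj E vi vj)
    (Aij : Set V) (hAij : Aij = {v : V | ¬ (Descend E vi v ∧ Descend E vj v)})
    (s : ℕ) (hs : 1 ≤ s)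
    (hcard : (2 + Δ ^ 2) * (s + 1) ≤ Aij.ncard) :
    ∃ Si Sj : Set V, Si.ncard = s ∧ Sj.ncard = s ∧
      IsIPA E vi vj Si Sj ∧
      Si ∪ {vi} ⊆ Aij ∧ Sj ∪ {vj} ⊆ Aij :=
  stmt_6_general E Δ hdag hdeg vi vj hne hnadj Aij hAij s hcard
end

section
/- Let G = (V, E) be a finite DAG in which every vertex has degree at most Δ, and let S, S' ⊆ V be disjoint. If there exists a set C ⊆ V \ (S ∪ S') with S ⊥d S' | C, then there exists such a set C' ⊆ V \ (S ∪ S') with S ⊥d S' | C' and |C'| ≤ min(|S|, |S'|) · Δ². -/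
/-! The separator is the Markov blanket of `S` in the subgraph induced on the ancestors of
`S ∪ S'`, without `S ∪ S'` itself; each vertex of `S` contributes at most `Δ²` vertices to it.

As some separator exists, no vertex of `S'` is adjacent to `S` or shares with `S` a child that
is an ancestor of `S ∪ S'`. Consider an active path from `S` to `S'` and the step after its last
visit to `S`. A parent of `S` or an ancestral child lies in the blanket, so it would have to be a
collider: a parent cannot be one, and after an ancestral collider comes a co-parent, which lies in
the blanket and is a non-collider. After a child outside the ancestors, colliders cannot be
activated by the blanket, which consists of ancestors; so the path stays directed and outside the
ancestors, and never reaches `S'`. -/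

section

open Relation

variable {V : Type*} {E : V → V → Prop}

lemma IsDAG.asymm (hdag : IsDAG E) {a b : V} (hab : E a b) : ¬ E b a :=
  fun hba => hdag a (.head hab (.single hba))

lemma IsDAG.ne_of_edge (hdag : IsDAG E) {a b : V} (hab : E a b) : a ≠ b := by
  rintro rfl
  exact hdag a (.single hab)

def ancestors (E : V → V → Prop) (B : Set V) : Set V := {v | ∃ b ∈ B, ReflTransGen E v b}

lemma subset_ancestors {B : Set V} : B ⊆ ancestors E B := fun b hb => ⟨b, hb, .refl⟩

lemma mem_ancestors_of_reflTransGen {B : Set V} {a b : V} (hab : ReflTransGen E a b)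
    (hb : b ∈ ancestors E B) : a ∈ ancestors E B :=
  let ⟨c, hc, hbc⟩ := hb
  ⟨c, hc, hab.trans hbc⟩

section Paths

variable {X Y C : Set V} {m : ℕ} {f : ℕ → V}

lemma ActivePath.reverse (h : ActivePath E C m f) : ActivePath E C m (fun t => f (m - t)) := by
  obtain ⟨⟨hinj, hadj⟩, hcond⟩ := h
  refine ⟨⟨fun i hi j hj hij => ?_, fun i hi => ?_⟩, fun i h0 hm => ?_⟩
  · have := hinj _ (Nat.sub_le m i) _ (Nat.sub_le m j) hij
    omega
  · have := hadj (m - (i + 1)) (by omega)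
    rw [show m - (i + 1) + 1 = m - i by omega] at this
    exact Or.symm this
  · have hcol : IsCollider E (fun t => f (m - t)) i ↔ IsCollider E f (m - i) := by
      simp only [IsCollider, show m - (i - 1) = m - i + 1 by omega,
        show m - (i + 1) = m - i - 1 by omega]
      exact and_comm
    rw [hcol]
    exact hcond (m - i) (by omega) (by omega)

lemma DSep.symm_s7 (h : DSep E X Y C) : DSep E Y X C :=
  fun m f h0 hm hact => h m _ (by simpa using hm) (by simpa using h0) hact.reverse

lemma DSep.disjoint_s7 (h : DSep E X Y C) : Disjoint X Y := by
  refine Set.disjoint_left.mpr fun x hX hY => h 0 (fun _ => x) hX hY ?_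
  exact ⟨⟨fun i hi j hj _ => by omega, fun i hi => by omega⟩, fun i h0 hm => by omega⟩

lemma DSep.not_undirAdj (h : DSep E X Y C) {x y : V} (hx : x ∈ X) (hy : y ∈ Y) :
    ¬ UndirAdj E x y := by
  intro hxy
  have hne : x ≠ y := fun hxy' => Set.disjoint_left.mp h.disjoint_s7 hx (hxy' ▸ hy)
  refine h 1 (fun t => [x, y].getD t x) (by simpa using hx) (by simpa using hy) ?_
  refine ⟨⟨fun i hi j hj hij => ?_, fun i hi => ?_⟩, fun i h0 hm => by omega⟩
  · interval_cases i <;> interval_cases j <;> simp_all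
  · interval_cases i
    simpa using hxy

lemma ActivePath.isCollider_of_mem (hact : ActivePath E C m f) {j : ℕ} (h0 : 0 < j)
    (hm : j < m) (hC : f j ∈ C) : IsCollider E f j := by
  by_contra hcol
  exact (hact.2 j h0 hm).1 hcol hC

lemma ActivePath.not_mem_ancestors_of_forward_exit {B : Set V} (hC : C ⊆ ancestors E B)
    (hact : ActivePath E C m f) {i : ℕ} (him : i < m) (hfwd : E (f i) (f (i + 1)))
    (hout : f (i + 1) ∉ ancestors E B) : f m ∉ ancestors E B := by
  suffices h : ∀ k, i + 1 + k ≤ m →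
      E (f (i + k)) (f (i + k + 1)) ∧ f (i + k + 1) ∉ ancestors E B by
    simpa [show i + (m - (i + 1)) + 1 = m by omega] using (h (m - (i + 1)) (by omega)).2
  intro k
  induction k with
  | zero => exact fun _ => ⟨hfwd, hout⟩
  | succ k ih =>
    intro hk
    obtain ⟨hin, hnot⟩ := ih (by omega)
    set j := i + k + 1
    have hncol : ¬ IsCollider E f j := by
      intro hcol
      apply hnot
      rcases (hact.2 j (by omega) (by omega)).2 hcol with hj | ⟨w, hw, hjw⟩
      · exact hC hj
      · exact mem_ancestors_of_reflTransGen (TransGen.to_reflTransGen hjw) (hC hw)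
    have hout' : E (f j) (f (j + 1)) := by
      refine (hact.1.2 j (by omega)).resolve_right fun hback => hncol ⟨?_, hback⟩
      simpa [j] using hin
    exact ⟨hout', fun hmem => hnot (mem_ancestors_of_reflTransGen (.single hout') hmem)⟩

lemma exists_last_index {p : ℕ → Prop} (h0 : p 0) (m : ℕ) :
    ∃ i ≤ m, p i ∧ ∀ j, i < j → j ≤ m → ¬ p j := by
  classical
  exact ⟨Nat.findGreatest p m, Nat.findGreatest_le m, Nat.findGreatest_spec (Nat.zero_le m) h0,
    fun _ hij hjm => Nat.findGreatest_is_greatest hij hjm⟩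

end Paths

section DirectedChains

def IsDirectedChain (E : V → V → Prop) (m : ℕ) (f : ℕ → V) : Prop :=
  ∀ t < m, E (f t) (f (t + 1))

variable {m : ℕ} {f : ℕ → V}

lemma IsDirectedChain.reflTransGen (h : IsDirectedChain E m f) {i j : ℕ} (hij : i ≤ j)
    (hjm : j ≤ m) : ReflTransGen E (f i) (f j) := by
  induction j, hij using Nat.le_induction with
  | base => exact .refl
  | succ j _ ih => exact (ih (by omega)).tail (h j (by omega))

lemma IsDirectedChain.transGen (h : IsDirectedChain E m f) {i j : ℕ} (hij : i < j)
    (hjm : j ≤ m) : TransGen E (f i) (f j) :=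
  .head' (h i (by omega)) (h.reflTransGen hij hjm)

lemma IsDirectedChain.activePath (hdag : IsDAG E) (h : IsDirectedChain E m f) {C : Set V}
    (hC : ∀ i, 0 < i → i < m → f i ∉ C) : ActivePath E C m f := by
  refine ⟨⟨fun i hi j hj hij => ?_, fun i hi => Or.inl (h i hi)⟩, fun i h0 hm => ?_⟩
  · by_contra hne
    rcases Nat.lt_or_gt_of_ne hne with hlt | hlt
    · exact hdag _ (hij ▸ h.transGen hlt hj)
    · exact hdag _ (hij ▸ h.transGen hlt hi)
  · exact ⟨fun _ => hC i h0 hm, fun hcol => absurd hcol.2 (hdag.asymm (h i hm))⟩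

lemma exists_isDirectedChain {a b : V} (hab : ReflTransGen E a b) :
    ∃ m f, f 0 = a ∧ f m = b ∧ IsDirectedChain E m f := by
  induction hab with
  | refl => exact ⟨0, fun _ => a, rfl, rfl, fun t ht => absurd ht (Nat.not_lt_zero t)⟩
  | @tail b c _ hbc ih =>
    obtain ⟨m, f, hf0, hfm, hf⟩ := ih
    refine ⟨m + 1, fun t => if t ≤ m then f t else c, by simpa using hf0, by simp, ?_⟩
    intro t ht
    rcases Nat.lt_or_ge t m with htm | htm
    · simpa [htm.le, Nat.succ_le_of_lt htm] using hf t htm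
    · obtain rfl : t = m := by omega
      simpa [hfm] using hbc

end DirectedChains

section Separation

variable {X Y C : Set V}

-- The directed path from `x` through `c` to `u` must be blocked.
lemma DSep.exists_mem_reflTransGen (hdag : IsDAG E) (hsep : DSep E X Y C) {x c u : V}
    (hx : x ∈ X) (hxc : E x c) (hcu : ReflTransGen E c u) (hu : u ∈ Y) :
    ∃ z ∈ C, ReflTransGen E c z := by
  obtain ⟨k, g, rfl, rfl, hg⟩ := exists_isDirectedChain hcu
  let f : ℕ → V := fun
    | 0 => x
    | t + 1 => g t
  have hf : IsDirectedChain E (k + 1) f := by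
    rintro (_ | t) ht
    · exact hxc
    · exact hg t (by omega)
  by_contra! hno
  refine hsep (k + 1) f hx hu (hf.activePath hdag fun i h0 hi hiC => ?_)
  obtain _ | j := i
  · omega
  · exact hno (g j) hiC (hg.reflTransGen (Nat.zero_le j) (by omega))

lemma DSep.not_mem_ancestors_of_common_child (hdag : IsDAG E) (hsep : DSep E X Y C)
    {x y c : V} (hx : x ∈ X) (hy : y ∈ Y) (hxc : E x c) (hyc : E y c) :
    c ∉ ancestors E (X ∪ Y) := by
  rintro ⟨u, hu, hcu⟩
  obtain ⟨z, hzC, hcz⟩ : ∃ z ∈ C, ReflTransGen E c z := by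
    rcases hu with hu | hu
    · exact hsep.symm_s7.exists_mem_reflTransGen hdag hy hyc hcu hu
    · exact hsep.exists_mem_reflTransGen hdag hx hxc hcu hu
  have hxy : x ≠ y := fun h => Set.disjoint_left.mp hsep.disjoint_s7 hx (h ▸ hy)
  have hxc' := hdag.ne_of_edge hxc
  have hyc' := hdag.ne_of_edge hyc
  refine hsep 2 (fun t => [x, c, y].getD t x) (by simpa using hx) (by simpa using hy) ?_
  refine ⟨⟨fun i hi j hj hij => ?_, fun i hi => ?_⟩, fun i h0 hm => ?_⟩
  · interval_cases i <;> interval_cases j <;> simp_all [eq_comm]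
  · interval_cases i
    · exact Or.inl (by simpa using hxc)
    · exact Or.inr (by simpa using hyc)
  · obtain rfl : i = 1 := by omega
    refine ⟨fun hcol => absurd ⟨by simpa using hxc, by simpa using hyc⟩ hcol, fun _ => ?_⟩
    rcases reflTransGen_iff_eq_or_transGen.mp hcz with rfl | hcz
    · exact Or.inl (by simpa using hzC)
    · exact Or.inr ⟨z, hzC, by simpa [Descend] using hcz⟩

def ancestralBlanket (E : V → V → Prop) (X Y : Set V) : Set V :=
  {v | v ∉ X ∪ Y ∧ v ∈ ancestors E (X ∪ Y) ∧
    ∃ x ∈ X, E v x ∨ E x v ∨ ∃ c ∈ ancestors E (X ∪ Y), E x c ∧ E v c}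

lemma disjoint_ancestralBlanket : Disjoint (ancestralBlanket E X Y) (X ∪ Y) :=
  Set.disjoint_left.mpr fun _ hv => hv.1

lemma DSep.dsep_ancestralBlanket (hdag : IsDAG E) (hsep : DSep E X Y C) :
    DSep E X Y (ancestralBlanket E X Y) := by
  intro m f hf0 hfm hact
  have hblock : ∀ j, 0 < j → j ≤ m → f j ∈ ancestralBlanket E X Y → IsCollider E f j :=
    fun j h0 hj hZ => hact.isCollider_of_mem h0
      (lt_of_le_of_ne hj fun h => hZ.1 (Or.inr (h ▸ hfm))) hZ
  obtain ⟨i, hi, hiX, hlast⟩ := exists_last_index (p := fun t => f t ∈ X) hf0 m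
  have him : i < m :=
    lt_of_le_of_ne hi fun h => Set.disjoint_left.mp hsep.disjoint_s7 hiX (h ▸ hfm)
  have hnX : f (i + 1) ∉ X := hlast (i + 1) (by omega) him
  have hnY : f (i + 1) ∉ Y := fun h => hsep.not_undirAdj hiX h (hact.1.2 i him)
  rcases hact.1.2 i him with hfwd | hback
  · by_cases hanc : f (i + 1) ∈ ancestors E (X ∪ Y)
    · have hcol := hblock (i + 1) (by omega) him
        ⟨by simp [hnX, hnY], hanc, f i, hiX, Or.inr (Or.inl hfwd)⟩
      have hi2 : i + 2 ≤ m := lt_of_le_of_ne him fun (h : i + 1 = m) => hnY (h ▸ hfm)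
      have hnX2 : f (i + 2) ∉ X := hlast (i + 2) (by omega) hi2
      have hnY2 : f (i + 2) ∉ Y := fun h =>
        hsep.not_mem_ancestors_of_common_child hdag hiX h hfwd hcol.2 hanc
      have hcol2 := hblock (i + 2) (by omega) hi2
        ⟨by simp [hnX2, hnY2], mem_ancestors_of_reflTransGen (.single hcol.2) hanc, f i, hiX,
          Or.inr (Or.inr ⟨f (i + 1), hanc, hfwd, hcol.2⟩)⟩
      exact hdag.asymm hcol.2 (by simpa using hcol2.1)
    · exact hact.not_mem_ancestors_of_forward_exit (fun _ hv => hv.2.1) him hfwd hanc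
        (subset_ancestors (Or.inr hfm))
  · have hanc :=
      mem_ancestors_of_reflTransGen (.single hback) (subset_ancestors (Set.mem_union_left Y hiX))
    have hcol := hblock (i + 1) (by omega) him
      ⟨by simp [hnX, hnY], hanc, f i, hiX, Or.inl hback⟩
    exact hdag.asymm hback (by simpa using hcol.1)

end Separation

section Counting

lemma Set.Finite.ncard_biUnion_le_mul {ι α : Type*} {t : Set ι} (ht : t.Finite)
    (s : ι → Set α) {n : ℕ} (h : ∀ i ∈ t, (s i).ncard ≤ n) :
    (⋃ i ∈ t, s i).ncard ≤ t.ncard * n := by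
  calc (⋃ i ∈ t, s i).ncard = (⋃ i ∈ ht.toFinset, s i).ncard := by simp
    _ ≤ ∑ i ∈ ht.toFinset, (s i).ncard := Finset.set_ncard_biUnion_le _ _
    _ ≤ ht.toFinset.card • n :=
        Finset.sum_le_card_nsmul _ _ _ fun i hi => h i (by simpa using hi)
    _ = t.ncard * n := by rw [smul_eq_mul, Set.ncard_eq_toFinset_card t ht]

variable [Finite V] {Δ : ℕ} (hdeg : ∀ v : V, ({w | E w v}.ncard + {w | E v w}.ncard) ≤ Δ)
include hdeg

lemma ncard_parents_union_coparents_le (x : V) :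
    ({w | E w x} ∪ ⋃ c ∈ {w | E x w}, insert c ({w | E w c} \ {x})).ncard ≤ Δ ^ 2 := by
  have hcop : ∀ c ∈ {w | E x w}, (insert c ({w | E w c} \ {x})).ncard ≤ Δ := fun c hxc => by
    have := Set.ncard_insert_le c ({w | E w c} \ {x})
    have := Set.ncard_sdiff_singleton_of_mem (s := {w | E w c}) hxc
    have := Set.ncard_pos (s := {w | E w c}) |>.mpr ⟨x, hxc⟩
    have := hdeg c
    omega
  have hx := hdeg x
  calc _ ≤ {w | E w x}.ncard + (⋃ c ∈ {w | E x w}, insert c ({w | E w c} \ {x})).ncard :=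
        Set.ncard_union_le _ _
    _ ≤ {w | E w x}.ncard + {w | E x w}.ncard * Δ :=
        Nat.add_le_add_left ((Set.toFinite _).ncard_biUnion_le_mul _ hcop) _
    _ ≤ Δ ^ 2 := by
        rcases Nat.eq_zero_or_pos Δ with rfl | hΔ
        · simp_all
        · nlinarith

lemma ncard_ancestralBlanket_le (X Y : Set V) :
    (ancestralBlanket E X Y).ncard ≤ X.ncard * Δ ^ 2 := by
  refine (Set.ncard_le_ncard ?_).trans (X.toFinite.ncard_biUnion_le_mul _
    fun x _ => ncard_parents_union_coparents_le hdeg x)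
  rintro v ⟨hv, -, x, hx, hvx | hxv | ⟨c, -, hxc, hvc⟩⟩
  · exact Set.mem_biUnion hx (Or.inl hvx)
  · exact Set.mem_biUnion hx (Or.inr (Set.mem_biUnion hxv (Set.mem_insert v _)))
  · have hvx : v ≠ x := by
      rintro rfl
      exact hv (Or.inl hx)
    exact Set.mem_biUnion hx (Or.inr (Set.mem_biUnion hxc (Set.mem_insert_of_mem c ⟨hvc, hvx⟩)))

lemma DSep.exists_dsep_ncard_le (hdag : IsDAG E) {X Y C : Set V} (hsep : DSep E X Y C) :
    ∃ C' : Set V, Disjoint C' (X ∪ Y) ∧ DSep E X Y C' ∧ C'.ncard ≤ X.ncard * Δ ^ 2 :=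
  ⟨ancestralBlanket E X Y, disjoint_ancestralBlanket, hsep.dsep_ancestralBlanket hdag,
    ncard_ancestralBlanket_le hdeg X Y⟩

end Counting

end

theorem stmt_7_general {V : Type*} [Fintype V] (E : V → V → Prop) (Δ : ℕ)
    (hdag : IsDAG E)
    (hdeg : ∀ v : V, ({w | E w v}.ncard + {w | E v w}.ncard) ≤ Δ)
    (S S' : Set V)
    (hex : ∃ C : Set V, Disjoint C (S ∪ S') ∧ DSep E S S' C) :
    ∃ C' : Set V, Disjoint C' (S ∪ S') ∧ DSep E S S' C' ∧
      C'.ncard ≤ min S.ncard S'.ncard * Δ ^ 2 := by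
  obtain ⟨C, -, hsep⟩ := hex
  rcases le_total S.ncard S'.ncard with hle | hle
  · obtain ⟨C', hdisj, hsep', hcard⟩ := hsep.exists_dsep_ncard_le hdeg hdag
    exact ⟨C', hdisj, hsep', by rwa [min_eq_left hle]⟩
  · obtain ⟨C', hdisj, hsep', hcard⟩ := hsep.symm_s7.exists_dsep_ncard_le hdeg hdag
    exact ⟨C', by rwa [Set.union_comm], hsep'.symm_s7, by rwa [min_eq_right hle]⟩

/-- Lemma: separating-set size bound.
In a finite DAG of maximum degree `Δ`, if disjoint sets `S, S'` admit some
separating set `C ⊆ V \ (S ∪ S')`, then they admit one of size at most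
`min(|S|, |S'|) · Δ²`. -/
theorem stmt_7 {V : Type*} [Fintype V] (E : V → V → Prop) (Δ : ℕ)
    (hdag : IsDAG E)
    (hdeg : ∀ v : V, ({w | E w v}.ncard + {w | E v w}.ncard) ≤ Δ)
    (S S' : Set V) (hdisj : Disjoint S S')
    (hex : ∃ C : Set V, Disjoint C (S ∪ S') ∧ DSep E S S' C) :
    ∃ C' : Set V, Disjoint C' (S ∪ S') ∧ DSep E S S' C' ∧
      C'.ncard ≤ min S.ncard S'.ncard * Δ ^ 2 :=
  stmt_7_general E Δ hdag hdeg S S' hex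
end

section
/- Let V be a finite set and E a relation on V whose transitive closure is irreflexive (i.e., (V, E) is a finite DAG), and for v ∈ V let DE(v) be the set of vertices reachable from v by a directed path of length ≥ 1. Then for every integer m ≥ 1, the set H = {v ∈ V : |V \ DE(v)| < m} satisfies |H| < m. -/
open Relation

theorem Relation.TransGen.exists_maximal {V : Type*} [Finite V] {E : V → V → Prop}
    (hdag : Irreflexive (TransGen E)) {s : Set V} (hs : s.Nonempty) :
    ∃ v ∈ s, ∀ u ∈ s, ¬ TransGen E v u := by
  have : IsTrans V (flip (TransGen E)) := ⟨fun _ _ _ hab hbc => hbc.trans hab⟩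
  have : Std.Irrefl (flip (TransGen E)) := ⟨hdag⟩
  exact (Finite.wellFounded_of_trans_of_irrefl (flip (TransGen E))).has_min s hs

/-- Observation: few `early vertices`.
In a finite DAG (edge relation `E` with irreflexive transitive closure), letting
`DE(v) = {w | v →⁺ w}` be the descendants of `v`, for every `m ≥ 1` the set of
vertices with fewer than `m` non-descendants has fewer than `m` elements. -/
theorem stmt_8 {V : Type*} [Fintype V] (E : V → V → Prop)
    (hdag : Irreflexive (Relation.TransGen E)) (m : ℕ) (hm : 1 ≤ m) :
    {v : V | ((Set.univ : Set V) \ {w | Relation.TransGen E v w}).ncard < m}.ncard < m := by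
  set H := {v : V | ((Set.univ : Set V) \ {w | TransGen E v w}).ncard < m}
  rcases H.eq_empty_or_nonempty with hH | hH
  · rwa [hH, Set.ncard_empty]
  obtain ⟨v, hvH, hvmax⟩ := TransGen.exists_maximal hdag hH
  have hH_nondesc : H ⊆ Set.univ \ {w | TransGen E v w} :=
    fun u hu => ⟨trivial, hvmax u hu⟩
  exact (Set.ncard_le_ncard hH_nondesc).trans_lt hvH
end
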